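/- arXiv:1611.08257 — 2 statements merged into one kernel-verified Lean document; each statement's English description precedes it below -/
import Mathlib

section
/- Let x̄ be feasible for the disjunctive program (P) with a fixed splitting F = (F₁,F₂), Ω = Ω₁ × Ω₂. Then for every λ₀ ≥ 0 and every critical direction u ∈ 𝓒(x̄) the chain of inclusions Λ̂^{λ₀}(x̄;0) ⊆ Λ̂^{λ₀}(x̄;u) ⊆ Λ^{λ₀}(x̄;u) ⊆ Λ^{λ₀}(x̄;0) holds, and all inclusions hold with equality if Ω consists of a single convex polyhedron. -/
noncomputable section

open Filter Topology Set

/-- Euclidean space `ℝ^n`. -/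
abbrev Euc (n : ℕ) : Type := EuclideanSpace ℝ (Fin n)

variable {E : Type*} [NormedAddCommGroup E] [NormedSpace ℝ E]
variable {Y : Type*} [NormedAddCommGroup Y] [NormedSpace ℝ Y]

/-- The contingent (Bouligand/tangent) cone `T(x;Ω)`; empty when `x ∉ Ω`. -/
def tcone (Ω : Set E) (x : E) : Set E :=
  {u | x ∈ Ω ∧ ∃ t : ℕ → ℝ, ∃ w : ℕ → E, (∀ k, 0 < t k) ∧
    Tendsto t atTop (𝓝 0) ∧ Tendsto w atTop (𝓝 u) ∧ ∀ k, x + t k • w k ∈ Ω}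

/-- The Fréchet (regular) normal cone `N̂(x;Ω)`, viewed as a set of continuous
linear functionals; empty when `x ∉ Ω`. -/
def fnc (Ω : Set E) (x : E) : Set (E →L[ℝ] ℝ) :=
  {ξ | x ∈ Ω ∧ ∀ ε : ℝ, 0 < ε → ∃ δ : ℝ, 0 < δ ∧
    ∀ y ∈ Ω, ‖y - x‖ < δ → ξ (y - x) ≤ ε * ‖y - x‖}

/-- The limiting (Mordukhovich) normal cone `N(x;Ω)`; empty when `x ∉ Ω`. -/
def lnc (Ω : Set E) (x : E) : Set (E →L[ℝ] ℝ) :=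
  {ξ | x ∈ Ω ∧ ∃ xk : ℕ → E, ∃ ξk : ℕ → (E →L[ℝ] ℝ),
    Tendsto xk atTop (𝓝 x) ∧ Tendsto ξk atTop (𝓝 ξ) ∧ ∀ k, ξk k ∈ fnc Ω (xk k)}

/-- The directional limiting normal cone `N(x;Ω;u)`; empty when `x ∉ Ω`. -/
def dlnc (Ω : Set E) (x u : E) : Set (E →L[ℝ] ℝ) :=
  {ξ | x ∈ Ω ∧ ∃ t : ℕ → ℝ, ∃ w : ℕ → E, ∃ ξk : ℕ → (E →L[ℝ] ℝ), (∀ k, 0 < t k) ∧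
    Tendsto t atTop (𝓝 0) ∧ Tendsto w atTop (𝓝 u) ∧ Tendsto ξk atTop (𝓝 ξ) ∧
    ∀ k, ξk k ∈ fnc Ω (x + t k • w k)}

/-- A convex polyhedron: a finite intersection of closed halfspaces. -/
def IsPolyhedron (P : Set E) : Prop :=
  ∃ k : ℕ, ∃ a : Fin k → (E →L[ℝ] ℝ), ∃ b : Fin k → ℝ, P = {x | ∀ j, a j x ≤ b j}

/-- A union of finitely many convex polyhedra. -/
def IsFinUnionPolyhedra (Ω : Set E) : Prop :=
  ∃ p : ℕ, ∃ P : Fin p → Set E, (∀ i, IsPolyhedron (P i)) ∧ Ω = ⋃ i, P i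

/-- The constraint multifunction `M(x) = F(x) - Ω`. -/
def cmap (F : E → Y) (Ω : Set Y) : E → Set Y := fun x => {y | F x - y ∈ Ω}

/-- Metric subregularity of `M` at `(x̄,ȳ) ∈ gph M`. -/
def SubregAt (M : E → Set Y) (x' : E) (y' : Y) : Prop :=
  y' ∈ M x' ∧ ∃ κ : ℝ, 0 < κ ∧ ∃ ε : ℝ, 0 < ε ∧ ∀ x : E, dist x x' < ε →
    EMetric.infEdist x {z | y' ∈ M z} ≤ ENNReal.ofReal κ * EMetric.infEdist y' (M x)

/-- The directional neighborhood `V_{ρ,δ}(u)`. -/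
def dirNbhd (u : E) (ρ δ : ℝ) : Set E :=
  {z | ‖z‖ ≤ ρ ∧ ‖‖u‖ • z - ‖z‖ • u‖ ≤ δ * (‖z‖ * ‖u‖)}

/-- Metric subregularity of `M` in direction `u` at `(x̄,ȳ) ∈ gph M`. -/
def SubregDir (M : E → Set Y) (x' : E) (y' : Y) (u : E) : Prop :=
  y' ∈ M x' ∧ ∃ ρ : ℝ, 0 < ρ ∧ ∃ δ : ℝ, 0 < δ ∧ ∃ κ : ℝ, 0 < κ ∧
    ∀ z ∈ dirNbhd u ρ δ,
      EMetric.infEdist (x' + z) {z' | y' ∈ M z'} ≤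
        ENNReal.ofReal κ * EMetric.infEdist y' (M (x' + z))

/-- Mixed metric regularity/subregularity of `M = (M₁,M₂)` at `(x̄,(ȳ₁,ȳ₂))`. -/
def MixedRegSubreg {Y₁ Y₂ : Type*} [NormedAddCommGroup Y₁] [NormedSpace ℝ Y₁]
    [NormedAddCommGroup Y₂] [NormedSpace ℝ Y₂]
    (M₁ : E → Set Y₁) (M₂ : E → Set Y₂) (x' : E) (y₁' : Y₁) (y₂' : Y₂) : Prop :=
  y₁' ∈ M₁ x' ∧ y₂' ∈ M₂ x' ∧ ∃ κ : ℝ, 0 < κ ∧ ∃ ε : ℝ, 0 < ε ∧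
    ∀ x : E, ∀ y₁ : Y₁, dist x x' < ε → dist y₁ y₁' < ε →
      EMetric.infEdist x {z | y₁ ∈ M₁ z ∧ y₂' ∈ M₂ z} ≤
        ENNReal.ofReal κ * EMetric.infEdist (y₁, y₂') (M₁ x ×ˢ M₂ x)

/-- The pair mapping `F = (F₁,F₂)`. -/
def PairMap {n m₁ m₂ : ℕ} (F₁ : Euc n → Euc m₁) (F₂ : Euc n → Euc m₂) :
    Euc n → Euc m₁ × Euc m₂ := fun x => (F₁ x, F₂ x)

/-- The multiplier set `Λ^{λ₀}(x̄;u)` for the splitting `F = (F₁,F₂)`,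
`Ω = Ω₁ × Ω₂`: multipliers `λ = (λ₁,λ₂)` in the directional limiting normal
cone with vanishing gradient of the generalized Lagrangian and
`λ₀ + ‖λ₁‖ ≠ 0`. -/
def Lam {n m₁ m₂ : ℕ} (f : Euc n → ℝ) (F₁ : Euc n → Euc m₁) (F₂ : Euc n → Euc m₂)
    (Ω₁ : Set (Euc m₁)) (Ω₂ : Set (Euc m₂)) (xb u : Euc n) (l0 : ℝ) :
    Set ((Euc m₁ × Euc m₂) →L[ℝ] ℝ) :=
  {μ | μ ∈ dlnc (Ω₁ ×ˢ Ω₂) (PairMap F₁ F₂ xb) (fderiv ℝ (PairMap F₁ F₂) xb u) ∧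
    l0 • fderiv ℝ f xb + μ.comp (fderiv ℝ (PairMap F₁ F₂) xb) = 0 ∧
    l0 + ‖μ.comp (ContinuousLinearMap.inl ℝ (Euc m₁) (Euc m₂))‖ ≠ 0}

/-- The multiplier set `Λ̂^{λ₀}(x̄;u)`: as `Λ^{λ₀}(x̄;u)` but with the Fréchet
normal cone to the tangent cone. -/
def LamHat {n m₁ m₂ : ℕ} (f : Euc n → ℝ) (F₁ : Euc n → Euc m₁) (F₂ : Euc n → Euc m₂)
    (Ω₁ : Set (Euc m₁)) (Ω₂ : Set (Euc m₂)) (xb u : Euc n) (l0 : ℝ) :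
    Set ((Euc m₁ × Euc m₂) →L[ℝ] ℝ) :=
  {μ | μ ∈ fnc (tcone (Ω₁ ×ˢ Ω₂) (PairMap F₁ F₂ xb)) (fderiv ℝ (PairMap F₁ F₂) xb u) ∧
    l0 • fderiv ℝ f xb + μ.comp (fderiv ℝ (PairMap F₁ F₂) xb) = 0 ∧
    l0 + ‖μ.comp (ContinuousLinearMap.inl ℝ (Euc m₁) (Euc m₂))‖ ≠ 0}

/-! Near any point, a finite union of polyhedra coincides with `x + C` for a closed cone `C`,
which is then its tangent cone `T`. So the Fréchet normals to `Ω` at `x + t d`, for small `t`,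
are those to `C` at `t d`, and they do not depend on `t > 0`: constant sequences give
`N̂(∇F u; T) ⊆ N(F x̄; Ω; ∇F u)`. An element of `N̂(0; T)` is nonpositive on the cone `T`,
while stationarity of the Lagrangian along the critical direction makes it nonnegative at
`∇F u`; so it vanishes there and is normal to `T` at `∇F u`. Replacing `t_k` by `√t_k` passes
from direction `∇F u` to `0`. For a single polyhedron `C` is convex, every Fréchet normal to
`C` lies in its polar, and the polar of `T` is `N̂(0; T)`, which closes the cycle. -/

def IsConic (C : Set E) : Prop := ∀ ⦃s : ℝ⦄, 0 < s → ∀ ⦃u : E⦄, u ∈ C → s • u ∈ C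

structure IsLocalConeAt (Ω : Set E) (x : E) (C : Set E) : Prop where
  isClosed : IsClosed C
  isConic : IsConic C
  eventually_mem_iff : ∀ᶠ y in 𝓝 x, y ∈ Ω ↔ y - x ∈ C

lemma tendsto_add_smul_nhds {ι : Type*} {l : Filter ι} (x : E) {u : E} {t : ι → ℝ}
    {w : ι → E} (ht : Tendsto t l (𝓝 0)) (hw : Tendsto w l (𝓝 u)) :
    Tendsto (fun k => x + t k • w k) l (𝓝 x) := by
  simpa using tendsto_const_nhds.add (ht.smul hw)

section Sequences

variable {Ω : Set E} {x u : E} {t : ℕ → ℝ} {w : ℕ → E}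

lemma mem_tcone_of_eventually (hx : x ∈ Ω) (ht : ∀ k, 0 < t k) (ht0 : Tendsto t atTop (𝓝 0))
    (hw : Tendsto w atTop (𝓝 u)) (hmem : ∀ᶠ k in atTop, x + t k • w k ∈ Ω) :
    u ∈ tcone Ω x := by
  obtain ⟨N, hN⟩ := eventually_atTop.1 hmem
  exact ⟨hx, fun k => t (k + N), fun k => w (k + N), fun k => ht _,
    ht0.comp (tendsto_add_atTop_nat N), hw.comp (tendsto_add_atTop_nat N),
    fun k => hN _ (Nat.le_add_left N k)⟩

lemma mem_dlnc_of_eventually {μ : E →L[ℝ] ℝ} {ξ : ℕ → E →L[ℝ] ℝ} (hx : x ∈ Ω)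
    (ht : ∀ k, 0 < t k) (ht0 : Tendsto t atTop (𝓝 0)) (hw : Tendsto w atTop (𝓝 u))
    (hξ : Tendsto ξ atTop (𝓝 μ)) (hmem : ∀ᶠ k in atTop, ξ k ∈ fnc Ω (x + t k • w k)) :
    μ ∈ dlnc Ω x u := by
  obtain ⟨N, hN⟩ := eventually_atTop.1 hmem
  exact ⟨hx, fun k => t (k + N), fun k => w (k + N), fun k => ξ (k + N), fun k => ht _,
    ht0.comp (tendsto_add_atTop_nat N), hw.comp (tendsto_add_atTop_nat N),
    hξ.comp (tendsto_add_atTop_nat N), fun k => hN _ (Nat.le_add_left N k)⟩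

lemma dlnc_subset_dlnc_zero (d : E) : dlnc Ω x d ⊆ dlnc Ω x 0 := by
  rintro μ ⟨hx, t, w, ξ, ht, ht0, hw, hξ, hmem⟩
  have hsqrt : Tendsto (fun k => √(t k)) atTop (𝓝 0) :=
    (Real.continuous_sqrt.tendsto' 0 0 Real.sqrt_zero).comp ht0
  refine ⟨hx, fun k => √(t k), fun k => √(t k) • w k, ξ, fun k => Real.sqrt_pos.2 (ht k),
    hsqrt, by simpa using hsqrt.smul hw, hξ, fun k => ?_⟩
  rw [smul_smul, Real.mul_self_sqrt (ht k).le]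
  exact hmem k

end Sequences

section FrechetNormals

variable {T C : Set E} {d v : E} {μ : E →L[ℝ] ℝ}

lemma mem_fnc_of_forall_apply_sub_nonpos (hd : d ∈ T) (h : ∀ y ∈ T, μ (y - d) ≤ 0) :
    μ ∈ fnc T d :=
  ⟨hd, fun ε hε => ⟨1, one_pos, fun y hy _ => (h y hy).trans (by positivity)⟩⟩

lemma apply_nonpos_of_mem_fnc_of_forall_add_smul_mem (hμ : μ ∈ fnc C v) {y : E}
    (hseg : ∀ s : ℝ, 0 < s → s ≤ 1 → v + s • y ∈ C) : μ y ≤ 0 := by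
  have key : ∀ ε > 0, μ y ≤ ε * ‖y‖ := by
    intro ε hε
    obtain ⟨δ, hδ, hfnc⟩ := hμ.2 ε hε
    have hsy : Tendsto (fun s : ℝ => s • y) (𝓝 0) (𝓝 0) :=
      (continuous_id.smul continuous_const).tendsto' 0 0 (zero_smul ℝ y)
    have hsmall : ∀ᶠ s in 𝓝 (0 : ℝ), s < 1 ∧ ‖s • y‖ < δ :=
      (eventually_lt_nhds one_pos).and
        ((hsy.eventually (Metric.ball_mem_nhds 0 hδ)).mono fun s hs => mem_ball_zero_iff.1 hs)
    obtain ⟨s, hs0 : 0 < s, hs1, hsδ⟩ :=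
      (eventually_mem_nhdsWithin.and (hsmall.filter_mono nhdsWithin_le_nhds)).exists
        (f := 𝓝[>] (0 : ℝ))
    have := hfnc _ (hseg s hs0 hs1.le) (by simpa using hsδ)
    rw [add_sub_cancel_left, map_smul, smul_eq_mul, norm_smul, Real.norm_of_nonneg hs0.le,
      mul_left_comm] at this
    exact le_of_mul_le_mul_left this hs0
  have hlim : Tendsto (fun ε : ℝ => ε * ‖y‖) (𝓝[>] 0) (𝓝 0) :=
    ((continuous_mul_const ‖y‖).tendsto' 0 0 (zero_mul _)).mono_left nhdsWithin_le_nhds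
  exact ge_of_tendsto hlim (eventually_nhdsWithin_of_forall key)

lemma mem_fnc_zero_iff (hT : IsConic T) : μ ∈ fnc T 0 ↔ 0 ∈ T ∧ ∀ y ∈ T, μ y ≤ 0 :=
  ⟨fun hμ => ⟨hμ.1, fun y hy =>
      apply_nonpos_of_mem_fnc_of_forall_add_smul_mem hμ fun s hs _ => by simpa using hT hs hy⟩,
    fun h => mem_fnc_of_forall_apply_sub_nonpos h.1 fun y hy => by simpa using h.2 y hy⟩

lemma mem_fnc_of_mem_fnc_zero (hT : IsConic T) (hd : d ∈ T) (hμ : μ ∈ fnc T 0)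
    (hμd : 0 ≤ μ d) : μ ∈ fnc T d := by
  have hpolar := ((mem_fnc_zero_iff hT).1 hμ).2
  have hμd0 : μ d = 0 := le_antisymm (hpolar d hd) hμd
  exact mem_fnc_of_forall_apply_sub_nonpos hd fun y hy => by
    simpa [map_sub, hμd0] using hpolar y hy

lemma Convex.apply_nonpos_of_mem_fnc (hconv : Convex ℝ C) (hC : IsConic C)
    (hμ : μ ∈ fnc C v) {w : E} (hw : w ∈ C) : μ w ≤ 0 := by
  have hnormal : ∀ w ∈ C, μ (w - v) ≤ 0 := fun w hw =>
    apply_nonpos_of_mem_fnc_of_forall_add_smul_mem hμ fun _ hs hs1 =>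
      hconv.add_smul_sub_mem hμ.1 hw ⟨hs.le, hs1⟩
  have hv := hnormal ((2 : ℝ) • v) (hC two_pos hμ.1)
  rw [two_smul, add_sub_cancel_right] at hv
  simpa using add_nonpos (hnormal w hw) hv

lemma fnc_subset_fnc_smul (hC : IsConic C) {t : ℝ} (ht : 0 < t) : fnc C d ⊆ fnc C (t • d) := by
  rintro μ ⟨hd, hfnc⟩
  refine ⟨hC ht hd, fun ε hε => ?_⟩
  obtain ⟨δ, hδ, hδfnc⟩ := hfnc ε hε
  refine ⟨t * δ, mul_pos ht hδ, fun z hz hzd => ?_⟩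
  have hscale : z - t • d = t • (t⁻¹ • z - d) := by
    rw [smul_sub, smul_smul, mul_inv_cancel₀ ht.ne', one_smul]
  rw [hscale, norm_smul, Real.norm_of_nonneg ht.le] at hzd ⊢
  rw [map_smul, smul_eq_mul, mul_left_comm]
  exact mul_le_mul_of_nonneg_left
    (hδfnc _ (hC (inv_pos.2 ht) hz) (lt_of_mul_lt_mul_left hzd ht.le)) ht.le

lemma fnc_subset_of_eventually_mem_iff {Ω Ω' : Set E} {y : E}
    (h : ∀ᶠ z in 𝓝 y, z ∈ Ω ↔ z ∈ Ω') : fnc Ω y ⊆ fnc Ω' y := by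
  rintro μ ⟨hy, hfnc⟩
  obtain ⟨r, hr, hloc⟩ := Metric.eventually_nhds_iff.1 h
  refine ⟨(hloc (dist_self y ▸ hr)).1 hy, fun ε hε => ?_⟩
  obtain ⟨δ, hδ, hδfnc⟩ := hfnc ε hε
  refine ⟨min δ r, lt_min hδ hr, fun z hz hzy => ?_⟩
  have hzr : dist z y < r := by rw [dist_eq_norm]; exact hzy.trans_le (min_le_right _ _)
  exact hδfnc z ((hloc hzr).2 hz) (hzy.trans_le (min_le_left _ _))

lemma fnc_eq_of_eventually_mem_iff {Ω Ω' : Set E} {y : E}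
    (h : ∀ᶠ z in 𝓝 y, z ∈ Ω ↔ z ∈ Ω') : fnc Ω y = fnc Ω' y :=
  (fnc_subset_of_eventually_mem_iff h).antisymm
    (fnc_subset_of_eventually_mem_iff (h.mono fun _ hz => hz.symm))

lemma fnc_preimage_sub (x y : E) : fnc ((· - x) ⁻¹' C) y = fnc C (y - x) := by
  ext μ
  simp only [fnc, mem_preimage, mem_ofPred_eq]
  refine and_congr_right fun _ => forall₂_congr fun ε _ => exists_congr fun δ => and_congr_right
    fun _ => ⟨fun h z hz => ?_, fun h z hz => ?_⟩
  · rw [sub_sub_eq_add_sub]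
    exact h (z + x) (by rwa [add_sub_cancel_right])
  · simpa only [sub_sub_sub_cancel_right] using h (z - x) hz

end FrechetNormals

namespace IsLocalConeAt

variable {Ω : Set E} {x : E} {C : Set E}

lemma eventually_fnc_eq (h : IsLocalConeAt Ω x C) : ∀ᶠ y in 𝓝 x, fnc Ω y = fnc C (y - x) :=
  (eventually_eventually_nhds.2 h.eventually_mem_iff).mono fun y hy =>
    (fnc_eq_of_eventually_mem_iff (Ω' := (· - x) ⁻¹' C) hy).trans (fnc_preimage_sub x y)

lemma tcone_eq (h : IsLocalConeAt Ω x C) (hx : x ∈ Ω) : tcone Ω x = C := by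
  ext u
  constructor
  · rintro ⟨-, t, w, ht, ht0, hw, hmem⟩
    refine h.isClosed.mem_of_tendsto hw
      (((tendsto_add_smul_nhds x ht0 hw).eventually h.eventually_mem_iff).mono fun k hk => ?_)
    have := h.isConic (inv_pos.2 (ht k)) (hk.1 (hmem k))
    rwa [add_sub_cancel_left, smul_smul, inv_mul_cancel₀ (ht k).ne', one_smul] at this
  · intro hu
    have ht0 : Tendsto (fun k : ℕ => 1 / ((k : ℝ) + 1)) atTop (𝓝 0) :=
      tendsto_one_div_add_atTop_nhds_zero_nat
    refine mem_tcone_of_eventually hx (fun _ => Nat.one_div_pos_of_nat) ht0 tendsto_const_nhds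
      (((tendsto_add_smul_nhds x ht0 tendsto_const_nhds).eventually
        h.eventually_mem_iff).mono fun k hk => hk.2 ?_)
    rw [add_sub_cancel_left]
    exact h.isConic Nat.one_div_pos_of_nat hu

lemma fnc_tcone_subset_dlnc (h : IsLocalConeAt Ω x C) (hx : x ∈ Ω) (d : E) :
    fnc (tcone Ω x) d ⊆ dlnc Ω x d := by
  rw [h.tcone_eq hx]
  intro μ hμ
  have ht0 : Tendsto (fun k : ℕ => 1 / ((k : ℝ) + 1)) atTop (𝓝 0) :=
    tendsto_one_div_add_atTop_nhds_zero_nat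
  refine mem_dlnc_of_eventually hx (fun _ => Nat.one_div_pos_of_nat) ht0 tendsto_const_nhds
    tendsto_const_nhds ?_
  filter_upwards [(tendsto_add_smul_nhds x ht0 tendsto_const_nhds).eventually
    h.eventually_fnc_eq] with k hk
  rw [hk, add_sub_cancel_left]
  exact fnc_subset_fnc_smul h.isConic Nat.one_div_pos_of_nat hμ

lemma dlnc_subset_fnc_tcone_zero (h : IsLocalConeAt Ω x C) (hconv : Convex ℝ C) (hx : x ∈ Ω)
    (v : E) : dlnc Ω x v ⊆ fnc (tcone Ω x) 0 := by
  rintro μ ⟨-, t, w, ξ, -, ht0, hw, hξ, hmem⟩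
  rw [h.tcone_eq hx, mem_fnc_zero_iff h.isConic]
  refine ⟨by simpa using h.eventually_mem_iff.self_of_nhds.1 hx, fun y hy => ?_⟩
  refine le_of_tendsto (((ContinuousLinearMap.apply ℝ ℝ y).continuous.tendsto μ).comp hξ)
    (((tendsto_add_smul_nhds x ht0 hw).eventually h.eventually_fnc_eq).mono fun k hk => ?_)
  exact hconv.apply_nonpos_of_mem_fnc h.isConic (hk ▸ hmem k) hy

lemma prod {Ω₁ : Set E} {Ω₂ : Set Y} {x₁ : E} {x₂ : Y} {C₁ : Set E} {C₂ : Set Y}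
    (h₁ : IsLocalConeAt Ω₁ x₁ C₁) (h₂ : IsLocalConeAt Ω₂ x₂ C₂) :
    IsLocalConeAt (Ω₁ ×ˢ Ω₂) (x₁, x₂) (C₁ ×ˢ C₂) where
  isClosed := h₁.isClosed.prod h₂.isClosed
  isConic := fun _ hs _ hu => ⟨h₁.isConic hs hu.1, h₂.isConic hs hu.2⟩
  eventually_mem_iff := by
    filter_upwards [(continuous_fst.tendsto (x₁, x₂)).eventually h₁.eventually_mem_iff,
      (continuous_snd.tendsto (x₁, x₂)).eventually h₂.eventually_mem_iff] with y hy₁ hy₂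
    simp only [mem_prod, Prod.fst_sub, Prod.snd_sub]
    exact and_congr hy₁ hy₂

lemma iUnion {ι : Type*} [Finite ι] {P : ι → Set E} {C : ι → Set E}
    (h : ∀ i, IsLocalConeAt (P i) x (C i)) : IsLocalConeAt (⋃ i, P i) x (⋃ i, C i) where
  isClosed := isClosed_iUnion_of_finite fun i => (h i).isClosed
  isConic := fun _ hs _ hu => by
    obtain ⟨i, hi⟩ := mem_iUnion.1 hu
    exact mem_iUnion.2 ⟨i, (h i).isConic hs hi⟩
  eventually_mem_iff := (eventually_all.2 fun i => (h i).eventually_mem_iff).mono fun y hy => by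
    simp only [mem_iUnion]
    exact exists_congr hy

lemma empty_of_notMem (hΩ : IsClosed Ω) (hx : x ∉ Ω) : IsLocalConeAt Ω x ∅ where
  isClosed := isClosed_empty
  isConic := fun _ _ _ hu => hu
  eventually_mem_iff :=
    eventually_of_mem (hΩ.isOpen_compl.mem_nhds hx) fun _ hy => iff_of_false hy id

end IsLocalConeAt

lemma IsPolyhedron.isClosed {P : Set E} (h : IsPolyhedron P) : IsClosed P := by
  obtain ⟨k, a, b, rfl⟩ := h
  simp only [ofPred_forall]
  exact isClosed_iInter fun j => isClosed_le (a j).continuous continuous_const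

lemma IsPolyhedron.exists_convex_isLocalConeAt {P : Set E} (h : IsPolyhedron P) (x : E) :
    ∃ C, Convex ℝ C ∧ IsLocalConeAt P x C := by
  by_cases hx : x ∈ P
  swap
  · exact ⟨∅, convex_empty, .empty_of_notMem h.isClosed hx⟩
  obtain ⟨k, a, b, rfl⟩ := h
  refine ⟨⋂ j, ⋂ (_ : a j x = b j), {v | a j v ≤ 0},
    convex_iInter fun j => convex_iInter fun _ => convex_halfSpace_le (a j).isLinear 0,
    isClosed_iInter fun j => isClosed_iInter fun _ => isClosed_le (a j).continuous
      continuous_const, fun s hs v hv => ?_, ?_⟩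
  · simp only [mem_iInter, mem_ofPred_eq, map_smul, smul_eq_mul] at hv ⊢
    exact fun j hj => mul_nonpos_of_nonneg_of_nonpos hs.le (hv j hj)
  · have hinactive : ∀ᶠ y in 𝓝 x, ∀ j, a j x < b j → a j y < b j :=
      eventually_all.2 fun j => eventually_imp_distrib_left.2 fun hj =>
        ((a j).continuous.tendsto x).eventually (eventually_lt_nhds hj)
    filter_upwards [hinactive] with y hy
    simp only [mem_iInter, mem_ofPred_eq, map_sub, sub_nonpos]
    refine ⟨fun hyP j hj => hj ▸ hyP j, fun hyC j => ?_⟩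
    rcases (hx j).lt_or_eq with hlt | heq
    · exact (hy j hlt).le
    · exact heq ▸ hyC j heq

lemma IsFinUnionPolyhedra.exists_isLocalConeAt {Ω : Set E} (h : IsFinUnionPolyhedra Ω) (x : E) :
    ∃ C, IsLocalConeAt Ω x C := by
  obtain ⟨p, P, hP, rfl⟩ := h
  choose C hC using fun i => (hP i).exists_convex_isLocalConeAt x
  exact ⟨⋃ i, C i, .iUnion fun i => (hC i).2⟩

lemma apply_nonneg_of_lagrangian_eq_zero {X Z : Type*} [NormedAddCommGroup X] [NormedSpace ℝ X]
    [NormedAddCommGroup Z] [NormedSpace ℝ Z] {φ : X →L[ℝ] ℝ} {A : X →L[ℝ] Z} {μ : Z →L[ℝ] ℝ}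
    {l0 : ℝ} {u : X} (hl0 : 0 ≤ l0) (hu : φ u ≤ 0) (h : l0 • φ + μ.comp A = 0) :
    0 ≤ μ (A u) := by
  have := congrArg (fun L : X →L[ℝ] ℝ => L u) h
  simp only [add_apply, smul_apply, ContinuousLinearMap.comp_apply, zero_apply,
    smul_eq_mul] at this
  nlinarith [mul_nonpos_of_nonneg_of_nonpos hl0 hu]

theorem stmt6_general {n m₁ m₂ : ℕ}
    (f : Euc n → ℝ)
    (F₁ : Euc n → Euc m₁) (F₂ : Euc n → Euc m₂)
    (Ω₁ : Set (Euc m₁)) (Ω₂ : Set (Euc m₂))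
    (hΩ₁ : IsFinUnionPolyhedra Ω₁) (hΩ₂ : IsFinUnionPolyhedra Ω₂)
    (xb : Euc n) (hx₁ : F₁ xb ∈ Ω₁) (hx₂ : F₂ xb ∈ Ω₂)
    (l0 : ℝ) (hl0 : 0 ≤ l0) (u : Euc n)
    (hu : fderiv ℝ (PairMap F₁ F₂) xb u ∈ tcone (Ω₁ ×ˢ Ω₂) (PairMap F₁ F₂ xb))
    (hcrit : fderiv ℝ f xb u ≤ 0) :
    (LamHat f F₁ F₂ Ω₁ Ω₂ xb 0 l0 ⊆ LamHat f F₁ F₂ Ω₁ Ω₂ xb u l0 ∧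
     LamHat f F₁ F₂ Ω₁ Ω₂ xb u l0 ⊆ Lam f F₁ F₂ Ω₁ Ω₂ xb u l0 ∧
     Lam f F₁ F₂ Ω₁ Ω₂ xb u l0 ⊆ Lam f F₁ F₂ Ω₁ Ω₂ xb 0 l0) ∧
    (IsPolyhedron (Ω₁ ×ˢ Ω₂) →
      (LamHat f F₁ F₂ Ω₁ Ω₂ xb 0 l0 = LamHat f F₁ F₂ Ω₁ Ω₂ xb u l0 ∧
       LamHat f F₁ F₂ Ω₁ Ω₂ xb u l0 = Lam f F₁ F₂ Ω₁ Ω₂ xb u l0 ∧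
       Lam f F₁ F₂ Ω₁ Ω₂ xb u l0 = Lam f F₁ F₂ Ω₁ Ω₂ xb 0 l0)) := by
  have hx : PairMap F₁ F₂ xb ∈ Ω₁ ×ˢ Ω₂ := ⟨hx₁, hx₂⟩
  obtain ⟨C₁, hC₁⟩ := hΩ₁.exists_isLocalConeAt (F₁ xb)
  obtain ⟨C₂, hC₂⟩ := hΩ₂.exists_isLocalConeAt (F₂ xb)
  have hC : IsLocalConeAt (Ω₁ ×ˢ Ω₂) (PairMap F₁ F₂ xb) (C₁ ×ˢ C₂) := hC₁.prod hC₂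
  have hd0 : fderiv ℝ (PairMap F₁ F₂) xb 0 = 0 := map_zero _
  have inc1 : LamHat f F₁ F₂ Ω₁ Ω₂ xb 0 l0 ⊆ LamHat f F₁ F₂ Ω₁ Ω₂ xb u l0 :=
    fun μ ⟨hμ, hstat, hnz⟩ => ⟨mem_fnc_of_mem_fnc_zero (hC.tcone_eq hx ▸ hC.isConic) hu
      (hd0 ▸ hμ) (apply_nonneg_of_lagrangian_eq_zero hl0 hcrit hstat), hstat, hnz⟩
  have inc2 : LamHat f F₁ F₂ Ω₁ Ω₂ xb u l0 ⊆ Lam f F₁ F₂ Ω₁ Ω₂ xb u l0 :=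
    fun μ ⟨hμ, hstat, hnz⟩ => ⟨hC.fnc_tcone_subset_dlnc hx _ hμ, hstat, hnz⟩
  have inc3 : Lam f F₁ F₂ Ω₁ Ω₂ xb u l0 ⊆ Lam f F₁ F₂ Ω₁ Ω₂ xb 0 l0 :=
    fun μ ⟨hμ, hstat, hnz⟩ => ⟨hd0 ▸ dlnc_subset_dlnc_zero _ hμ, hstat, hnz⟩
  refine ⟨⟨inc1, inc2, inc3⟩, fun hpoly => ?_⟩
  obtain ⟨C, hconv, hC'⟩ := hpoly.exists_convex_isLocalConeAt (PairMap F₁ F₂ xb)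
  have inc4 : Lam f F₁ F₂ Ω₁ Ω₂ xb 0 l0 ⊆ LamHat f F₁ F₂ Ω₁ Ω₂ xb 0 l0 :=
    fun μ ⟨hμ, hstat, hnz⟩ => ⟨hd0 ▸ hC'.dlnc_subset_fnc_tcone_zero hconv hx _ hμ, hstat, hnz⟩
  exact ⟨inc1.antisymm (inc2.trans (inc3.trans inc4)),
    inc2.antisymm (inc3.trans (inc4.trans inc1)), inc3.antisymm (inc4.trans (inc1.trans inc2))⟩

/-- Lemma 3.2: the chain of inclusions between the multiplier sets, with
equalities when `Ω` is a single convex polyhedron. -/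
theorem stmt6 {n m₁ m₂ : ℕ}
    (f : Euc n → ℝ) (hf : ContDiff ℝ 1 f)
    (F₁ : Euc n → Euc m₁) (F₂ : Euc n → Euc m₂)
    (hF₁ : ContDiff ℝ 1 F₁) (hF₂ : ContDiff ℝ 1 F₂)
    (Ω₁ : Set (Euc m₁)) (Ω₂ : Set (Euc m₂))
    (hΩ₁ : IsFinUnionPolyhedra Ω₁) (hΩ₂ : IsFinUnionPolyhedra Ω₂)
    (xb : Euc n) (hx₁ : F₁ xb ∈ Ω₁) (hx₂ : F₂ xb ∈ Ω₂)
    (l0 : ℝ) (hl0 : 0 ≤ l0) (u : Euc n)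
    (hu : fderiv ℝ (PairMap F₁ F₂) xb u ∈ tcone (Ω₁ ×ˢ Ω₂) (PairMap F₁ F₂ xb))
    (hcrit : fderiv ℝ f xb u ≤ 0) :
    (LamHat f F₁ F₂ Ω₁ Ω₂ xb 0 l0 ⊆ LamHat f F₁ F₂ Ω₁ Ω₂ xb u l0 ∧
     LamHat f F₁ F₂ Ω₁ Ω₂ xb u l0 ⊆ Lam f F₁ F₂ Ω₁ Ω₂ xb u l0 ∧
     Lam f F₁ F₂ Ω₁ Ω₂ xb u l0 ⊆ Lam f F₁ F₂ Ω₁ Ω₂ xb 0 l0) ∧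
    (IsPolyhedron (Ω₁ ×ˢ Ω₂) →
      (LamHat f F₁ F₂ Ω₁ Ω₂ xb 0 l0 = LamHat f F₁ F₂ Ω₁ Ω₂ xb u l0 ∧
       LamHat f F₁ F₂ Ω₁ Ω₂ xb u l0 = Lam f F₁ F₂ Ω₁ Ω₂ xb u l0 ∧
       Lam f F₁ F₂ Ω₁ Ω₂ xb u l0 = Lam f F₁ F₂ Ω₁ Ω₂ xb 0 l0)) :=
  stmt6_general f F₁ F₂ Ω₁ Ω₂ hΩ₁ hΩ₂ xb hx₁ hx₂ l0 hl0 u hu hcrit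
end
end

section
/- Let x̄ be feasible for the constraint system F(x) ∈ Ω. If the weak directional metric subregularity constraint qualification WDMSCQ holds at x̄, then the generalized Guignard constraint qualification GGCQ holds at x̄, i.e. N̂(x̄;𝓕) = N̂(0; T_lin(x̄)). -/
/-!
If `M` is metrically subregular at `(x̄, 0)` in a direction `u` with `∇F(x̄)u ∈ T(F(x̄);Ω)`,
then `u` is tangent to `𝓕`: along `x̄ + t u` the residual `d(F(x̄ + t u), Ω)` is `o(t)`, so
subregularity provides feasible points at distance `o(t)`. A Fréchet normal to `𝓕` is
nonpositive on tangent directions, hence on the generators of `conv T_lin(x̄)` and so on all of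
`T_lin(x̄)`, which for a cone means lying in `N̂(0; T_lin(x̄))`. Conversely `T(x̄;𝓕) ⊆ T_lin(x̄)`
by the chain rule, and in finite dimensions a functional nonpositive on `T(x̄;𝓕)` is a Fréchet
normal, by compactness of the unit sphere.
-/

noncomputable section

open Filter Topology Set

variable {E : Type*} [NormedAddCommGroup E] [NormedSpace ℝ E]
variable {Y : Type*} [NormedAddCommGroup Y] [NormedSpace ℝ Y]

theorem zero_mem_tcone {S : Set E} {x : E} (hx : x ∈ S) : (0 : E) ∈ tcone S x :=
  ⟨hx, fun k => 1 / (k + 1 : ℝ), fun _ => 0, fun _ => Nat.one_div_pos_of_nat,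
    tendsto_one_div_add_atTop_nhds_zero_nat, tendsto_const_nhds, fun _ => by simpa using hx⟩

theorem smul_mem_tcone {S : Set E} {x v : E} (hv : v ∈ tcone S x) {c : ℝ} (hc : 0 < c) :
    c • v ∈ tcone S x := by
  obtain ⟨hx, t, w, ht, ht0, hw, hmem⟩ := hv
  refine ⟨hx, fun k => t k / c, fun k => c • w k, fun k => div_pos (ht k) hc,
    by simpa using ht0.div_const c, hw.const_smul c, fun k => ?_⟩
  rw [smul_smul, div_mul_cancel₀ _ hc.ne']
  exact hmem k

theorem apply_nonpos_of_mem_fnc_of_mem_tcone {S : Set E} {x u : E} {ξ : E →L[ℝ] ℝ}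
    (hξ : ξ ∈ fnc S x) (hu : u ∈ tcone S x) : ξ u ≤ 0 := by
  obtain ⟨-, t, w, ht, ht0, hw, hmem⟩ := hu
  have hle : ∀ ε > 0, ξ u ≤ ε * ‖u‖ := by
    intro ε hε
    obtain ⟨δ, hδ, hξδ⟩ := hξ.2 ε hε
    have hsmall : ∀ᶠ k in atTop, ‖t k • w k‖ < δ := by
      simpa using (ht0.smul hw).norm.eventually (gt_mem_nhds (by simpa using hδ))
    refine le_of_tendsto_of_tendsto (ξ.continuous.tendsto u |>.comp hw)
      (hw.norm.const_mul ε) (hsmall.mono fun k hk => ?_)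
    have h := hξδ _ (hmem k) (by simpa using hk)
    rw [add_sub_cancel_left, map_smul, norm_smul, Real.norm_of_nonneg (ht k).le, smul_eq_mul,
      mul_left_comm] at h
    exact le_of_mul_le_mul_left h (ht k)
  have hlim : Tendsto (fun ε : ℝ => ε * ‖u‖) (𝓝[>] 0) (𝓝 0) := by
    simpa using tendsto_nhdsWithin_of_tendsto_nhds (tendsto_id.mul_const ‖u‖) (a := (0 : ℝ))
  exact ge_of_tendsto hlim (eventually_nhdsWithin_of_forall hle)

theorem mem_fnc_zero_iff_of_cone {C : Set E} (h0 : (0 : E) ∈ C)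
    (hC : ∀ u ∈ C, ∀ c : ℝ, 0 < c → c • u ∈ C) {ξ : E →L[ℝ] ℝ} :
    ξ ∈ fnc C 0 ↔ ∀ u ∈ C, ξ u ≤ 0 := by
  refine ⟨fun hξ u hu => apply_nonpos_of_mem_fnc_of_mem_tcone hξ ?_,
    fun h => ⟨h0, fun ε hε => ⟨1, one_pos, fun y hy _ => ?_⟩⟩⟩
  · exact ⟨h0, fun k => 1 / (k + 1 : ℝ), fun _ => u, fun _ => Nat.one_div_pos_of_nat,
      tendsto_one_div_add_atTop_nhds_zero_nat, tendsto_const_nhds,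
      fun _ => by simpa using hC u hu _ Nat.one_div_pos_of_nat⟩
  · rw [sub_zero]
    exact (h y hy).trans (by positivity)

theorem mem_tcone_of_tendsto_normalize {S : Set E} {x a : E} (hx : x ∈ S) {y : ℕ → E}
    (hyS : ∀ k, y k ∈ S) (hne : ∀ k, y k ≠ x) (hy : Tendsto y atTop (𝓝 x))
    (ha : Tendsto (fun k => ‖y k - x‖⁻¹ • (y k - x)) atTop (𝓝 a)) : a ∈ tcone S x := by
  have hpos : ∀ k, 0 < ‖y k - x‖ := fun k => norm_pos_iff.mpr (sub_ne_zero.mpr (hne k))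
  refine ⟨hx, fun k => ‖y k - x‖, _, hpos, tendsto_iff_norm_sub_tendsto_zero.mp hy, ha,
    fun k => ?_⟩
  rw [smul_inv_smul₀ (hpos k).ne', add_sub_cancel]
  exact hyS k

theorem mem_fnc_of_forall_mem_tcone_nonpos [ProperSpace E] {S : Set E} {x : E}
    {ξ : E →L[ℝ] ℝ} (hx : x ∈ S) (h : ∀ u ∈ tcone S x, ξ u ≤ 0) : ξ ∈ fnc S x := by
  refine ⟨hx, fun ε hε => ?_⟩
  by_contra! hcon
  choose y hyS hyx hyξ using fun k : ℕ => hcon (1 / (k + 1)) Nat.one_div_pos_of_nat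
  have hne : ∀ k, y k ≠ x := fun k hk => by simpa [hk] using hyξ k
  have hpos : ∀ k, 0 < ‖y k - x‖ := fun k => norm_pos_iff.mpr (sub_ne_zero.mpr (hne k))
  set w : ℕ → E := fun k => ‖y k - x‖⁻¹ • (y k - x)
  have hw : ∀ k, w k ∈ Metric.sphere (0 : E) 1 := fun k => by
    simp [w, norm_smul, (hpos k).ne']
  have hξw : ∀ k, ε < ξ (w k) := fun k => by
    have := hyξ k
    simp only [w, map_smul, smul_eq_mul]
    rwa [lt_inv_mul_iff₀ (hpos k), mul_comm]
  obtain ⟨a, -, φ, hφ, hwa⟩ := tendsto_subseq_of_bounded Metric.isBounded_sphere hw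
  have hy : Tendsto y atTop (𝓝 x) := tendsto_iff_norm_sub_tendsto_zero.mpr <|
    squeeze_zero (fun _ => norm_nonneg _) (fun k => (hyx k).le)
      tendsto_one_div_add_atTop_nhds_zero_nat
  have ha : a ∈ tcone S x := mem_tcone_of_tendsto_normalize hx (fun k => hyS (φ k))
    (fun k => hne (φ k)) (hy.comp hφ.tendsto_atTop) hwa
  have : ε ≤ ξ a := ge_of_tendsto ((ξ.continuous.tendsto a).comp hwa)
    (Eventually.of_forall fun k => (hξw (φ k)).le)
  linarith [h a ha]

theorem HasFDerivAt.tendsto_inv_smul_sub {F : E → Y} {A : E →L[ℝ] Y} {x u : E}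
    (hF : HasFDerivAt F A x) {t : ℕ → ℝ} {w : ℕ → E} (ht : ∀ k, 0 < t k)
    (ht0 : Tendsto t atTop (𝓝 0)) (hw : Tendsto w atTop (𝓝 u)) :
    Tendsto (fun k => (t k)⁻¹ • (F (x + t k • w k) - F x)) atTop (𝓝 (A u)) :=
  hF.hasFDerivWithinAt.lim (s := univ) (by simpa using ht0.smul hw)
    (Eventually.of_forall fun _ => mem_univ _)
    (hw.congr fun k => (inv_smul_smul₀ (ht k).ne' _).symm)

theorem HasFDerivAt.mapsTo_tcone {F : E → Y} {A : E →L[ℝ] Y} {Ω : Set Y} {x : E}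
    (hF : HasFDerivAt F A x) : MapsTo A (tcone {z | F z ∈ Ω} x) (tcone Ω (F x)) := by
  rintro u ⟨hx, t, w, ht, ht0, hw, hmem⟩
  refine ⟨hx, t, fun k => (t k)⁻¹ • (F (x + t k • w k) - F x), ht, ht0,
    hF.tendsto_inv_smul_sub ht ht0 hw, fun k => ?_⟩
  rw [smul_inv_smul₀ (ht k).ne', add_sub_cancel]
  exact hmem k

theorem mem_tcone_of_infDist_le {S : Set E} {x u : E} (hx : x ∈ S) {t r : ℕ → ℝ}
    (ht : ∀ k, 0 < t k) (ht0 : Tendsto t atTop (𝓝 0)) (hr : Tendsto r atTop (𝓝 0))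
    (hd : ∀ᶠ k in atTop, Metric.infDist (x + t k • u) S ≤ t k * r k) : u ∈ tcone S x := by
  -- the slack `t k * t k` stands in for a nearest point of `S`, which need not exist
  have hy (k : ℕ) : ∃ y ∈ S, dist (x + t k • u) y < Metric.infDist (x + t k • u) S + t k * t k :=
    (Metric.infDist_lt_iff ⟨x, hx⟩).mp (lt_add_of_pos_right _ (mul_pos (ht k) (ht k)))
  choose y hyS hyd using hy
  refine ⟨hx, t, fun k => (t k)⁻¹ • (y k - x), ht, ht0, ?_, fun k => ?_⟩
  · rw [tendsto_iff_norm_sub_tendsto_zero]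
    refine squeeze_zero' (Eventually.of_forall fun _ => norm_nonneg _) (hd.mono fun k hk => ?_)
      (by simpa using hr.add ht0)
    have hsplit : (t k)⁻¹ • (y k - x) - u = (t k)⁻¹ • (y k - (x + t k • u)) := by
      rw [← sub_sub, smul_sub _ (y k - x), inv_smul_smul₀ (ht k).ne']
    rw [hsplit, norm_smul, Real.norm_of_nonneg (inv_pos.mpr (ht k)).le, ← dist_eq_norm,
      dist_comm, inv_mul_le_iff₀ (ht k)]
    linarith [hyd k]
  · rw [smul_inv_smul₀ (ht k).ne', add_sub_cancel]
    exact hyS k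

theorem smul_mem_dirNbhd {u : E} {t ρ δ : ℝ} (ht : 0 ≤ t) (htρ : t * ‖u‖ ≤ ρ) (hδ : 0 ≤ δ) :
    t • u ∈ dirNbhd u ρ δ := by
  have hcollinear : ‖u‖ • t • u - (t * ‖u‖) • u = 0 := by rw [smul_smul, mul_comm, sub_self]
  refine ⟨?_, ?_⟩
  · rwa [norm_smul, Real.norm_of_nonneg ht]
  · rw [norm_smul, Real.norm_of_nonneg ht, hcollinear, norm_zero]
    positivity

theorem mem_tcone_preimage_of_subregDir {F : E → Y} {A : E →L[ℝ] Y} {Ω : Set Y} {x u : E}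
    (hF : HasFDerivAt F A x) (hu : A u ∈ tcone Ω (F x)) (hsub : SubregDir (cmap F Ω) x 0 u) :
    u ∈ tcone {z | F z ∈ Ω} x := by
  obtain ⟨hx, t, v, ht, ht0, hv, hmem⟩ := hu
  obtain ⟨-, ρ, hρ, δ, hδ, κ, hκ, hreg⟩ := hsub
  set s : ℕ → Y := fun k => (t k)⁻¹ • (F (x + t k • u) - F x) - v k
  have hs : Tendsto s atTop (𝓝 0) := by
    simpa using (hF.tendsto_inv_smul_sub ht ht0 (tendsto_const_nhds (x := u))).sub hv
  have hpre : {z | (0 : Y) ∈ cmap F Ω z} = {z | F z ∈ Ω} := by ext; simp [cmap]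
  have hdir : ∀ᶠ k in atTop, t k * ‖u‖ ≤ ρ :=
    (ht0.mul_const ‖u‖).eventually (eventually_le_nhds (by simpa using hρ))
  refine mem_tcone_of_infDist_le hx ht ht0 (r := fun k => κ * ‖s k‖)
    (by simpa using hs.norm.const_mul κ) (hdir.mono fun k hk => ?_)
  have hresidual : Metric.infEDist 0 (cmap F Ω (x + t k • u)) ≤ ENNReal.ofReal (t k * ‖s k‖) := by
    have hw : F (x + t k • u) - (F x + t k • v k) ∈ cmap F Ω (x + t k • u) := by
      simpa [cmap] using hmem k
    have hts : F (x + t k • u) - (F x + t k • v k) = t k • s k := by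
      simp only [s, smul_sub, smul_inv_smul₀ (ht k).ne']
      abel
    refine (Metric.infEDist_le_edist_of_mem hw).trans_eq ?_
    rw [edist_dist, dist_zero_left, hts, norm_smul, Real.norm_of_nonneg (ht k).le]
  have hbound := (hreg _ (smul_mem_dirNbhd (ht k).le hk hδ.le)).trans
    (mul_le_mul_right hresidual _)
  rw [hpre, ← ENNReal.ofReal_mul hκ.le] at hbound
  rw [mul_left_comm]
  exact ENNReal.toReal_le_of_le_ofReal (by have := ht k; positivity) hbound

theorem stmt11_general {n m : ℕ}
    (F : Euc n → Euc m) (hF : ContDiff ℝ 1 F)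
    (Ω : Set (Euc m))
    (xb : Euc n) (hfeas : F xb ∈ Ω)
    (hWDMSCQ : ∃ N : ℕ, ∃ uu : Fin N → Euc n,
      (∀ i, fderiv ℝ F xb (uu i) ∈ tcone Ω (F xb)) ∧
      convexHull ℝ {u : Euc n | fderiv ℝ F xb u ∈ tcone Ω (F xb)} =
        {x : Euc n | ∃ α : Fin N → ℝ, (∀ i, 0 ≤ α i) ∧ x = ∑ i, α i • uu i} ∧
      ∀ i, SubregDir (cmap F Ω) xb 0 (uu i)) :
    fnc {x | F x ∈ Ω} xb = fnc {u : Euc n | fderiv ℝ F xb u ∈ tcone Ω (F xb)} 0 := by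
  obtain ⟨N, uu, huu, hconv, hsubreg⟩ := hWDMSCQ
  have hA : HasFDerivAt F (fderiv ℝ F xb) xb := (hF.differentiable one_ne_zero xb).hasFDerivAt
  ext ξ
  rw [mem_fnc_zero_iff_of_cone (by simpa using zero_mem_tcone hfeas)
    fun u hu c hc => by simpa using smul_mem_tcone hu hc]
  constructor
  · intro hξ u hu
    have hgen : ∀ i, ξ (uu i) ≤ 0 := fun i => apply_nonpos_of_mem_fnc_of_mem_tcone hξ
      (mem_tcone_preimage_of_subregDir hA (huu i) (hsubreg i))
    have hcomb := subset_convexHull ℝ _ hu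
    rw [hconv] at hcomb
    obtain ⟨α, hα, rfl⟩ := hcomb
    simpa only [map_sum, map_smul, smul_eq_mul] using
      Finset.sum_nonpos fun i _ => mul_nonpos_of_nonneg_of_nonpos (hα i) (hgen i)
  · exact fun h => mem_fnc_of_forall_mem_tcone_nonpos hfeas fun u hu => h u (hA.mapsTo_tcone hu)

/-- Proposition 3.12: WDMSCQ implies GGCQ. -/
theorem stmt11 {n m : ℕ}
    (F : Euc n → Euc m) (hF : ContDiff ℝ 1 F)
    (Ω : Set (Euc m)) (hΩ : IsFinUnionPolyhedra Ω)
    (xb : Euc n) (hfeas : F xb ∈ Ω)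
    (hWDMSCQ : ∃ N : ℕ, ∃ uu : Fin N → Euc n,
      (∀ i, fderiv ℝ F xb (uu i) ∈ tcone Ω (F xb)) ∧
      convexHull ℝ {u : Euc n | fderiv ℝ F xb u ∈ tcone Ω (F xb)} =
        {x : Euc n | ∃ α : Fin N → ℝ, (∀ i, 0 ≤ α i) ∧ x = ∑ i, α i • uu i} ∧
      ∀ i, SubregDir (cmap F Ω) xb 0 (uu i)) :
    fnc {x | F x ∈ Ω} xb = fnc {u : Euc n | fderiv ℝ F xb u ∈ tcone Ω (F xb)} 0 :=
  stmt11_general F hF Ω xb hfeas hWDMSCQ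
end
end
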